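/- Let M = P_X(M₁, M₂) be a modular join over X, i.e., M is a simple matroid on E = E₁ ∪ E₂ where E₁ and E₂ are proper modular flats with E₁ ∩ E₂ = X and Mᵢ = M|Eᵢ. Then χ(M, t) · χ(M|X, t) = χ(M₁, t) · χ(M₂, t), where χ denotes the characteristic polynomial. -/

import Mathlib

/-
For a flat `x`, the Möbius function of the lattice of flats satisfies
`μ(F) = ∑ μ(A) μ(B)` over pairs of flats with `A ⊆ x`, `B ∩ x = cl ∅` and `cl(A ∪ B) = F`
(both sides sum to `δ(F, cl ∅)` over the flats below `F`). When `x` is modular,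
`r(cl(A ∪ B)) = r(A) + r(B)` for such pairs, so `χ(M) = χ(M|x) · q(M, x)` (Stanley), where
`q(M, x)` sums `μ(B) t^(r(M) - r(x) - r(B))` over flats `B` with `B ∩ x = cl ∅`.
Apply this to `E₁` in `M` and to `E₁ ∩ E₂`, which is modular in `M|E₂`. Since `E = E₁ ∪ E₂`,
the flats `B` with `B ∩ E₁ = cl ∅` lie in `E₂`, and `r(E₂) - r(E₁ ∩ E₂) = r(M) - r(E₁)`, so
both factorizations have the same cofactor `q`, and the identity follows.
-/

open scoped Classical Matroid

namespace Paper

variable {α : Type*}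

/-- The rank of a set in a matroid: the maximum size of an independent subset. -/
noncomputable def mrk (M : Matroid α) (X : Set α) : ℕ :=
  sSup {n | ∃ I, M.Indep I ∧ I ⊆ X ∧ I.ncard = n}

/-- A circuit of a matroid: a minimal dependent subset of the ground set. -/
def Circuit (M : Matroid α) (C : Set α) : Prop :=
  C ⊆ M.E ∧ ¬ M.Indep C ∧ ∀ D ⊂ C, M.Indep D

/-- A matroid is simple if every subset of the ground set with at most two
elements is independent. -/
def SimpleM (M : Matroid α) : Prop :=
  ∀ X ⊆ M.E, X.ncard ≤ 2 → M.Indep X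

/-- A modular flat: a flat `X` with `r X + r Y = r (X ⊓ Y) + r (X ⊔ Y)` for every flat `Y`
(meet of flats is intersection; join is the closure of the union). -/
def ModularFlat (M : Matroid α) (X : Set α) : Prop :=
  M.IsFlat X ∧ ∀ Y, M.IsFlat Y →
    mrk M X + mrk M Y = mrk M (X ∩ Y) + mrk M (M.closure (X ∪ Y))

/-- A matroid is round if its ground set is not the union of two proper flats. -/
def Round (M : Matroid α) : Prop :=
  ¬ ∃ F₁ F₂ : Set α, M.IsFlat F₁ ∧ M.IsFlat F₂ ∧ F₁ ≠ M.E ∧ F₂ ≠ M.E ∧ M.E = F₁ ∪ F₂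

/-- Möbius function (measured from the bottom flat) on the lattice of flats of a matroid. -/
noncomputable def mob (M : Matroid α) [Fintype α] : Finset α → ℤ
  | F =>
    if (F : Set α) = M.closure ∅ then 1
    else - ∑ G ∈ (Finset.univ.powerset.filter
        (fun G : Finset α => M.IsFlat ↑G ∧ (G : Set α) ⊂ (F : Set α))).attach,
        mob M G.1
termination_by F => F.card
decreasing_by
  · have hG := G.2
    simp only [Finset.mem_filter] at hG
    exact Finset.card_lt_card (Finset.coe_ssubset.mp hG.2.2)

/-- The characteristic polynomial `χ(M, t) = ∑_{F flat} μ(F) t^(r(M) - r(F))`. -/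
noncomputable def charPoly (M : Matroid α) [Fintype α] : Polynomial ℤ :=
  ∑ F ∈ Finset.univ.powerset.filter (fun F : Finset α => M.IsFlat ↑F),
    Polynomial.C (mob M F) * Polynomial.X ^ (mrk M M.E - mrk M ↑F)

open Set Matroid

section Rank

variable [Finite α] {M : Matroid α} {X Y : Set α}

lemma coe_mrk (M : Matroid α) (X : Set α) : (mrk M X : ℕ∞) = M.eRk X := by
  obtain ⟨I, hI⟩ := M.exists_isBasis' X
  have hle : ∀ n ∈ {n | ∃ J, M.Indep J ∧ J ⊆ X ∧ J.ncard = n}, n ≤ I.ncard := by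
    rintro n ⟨J, hJ, hJX, rfl⟩
    have := hJ.encard_le_eRk_of_subset hJX
    rw [← hI.encard_eq_eRk, ← J.toFinite.cast_ncard_eq, ← I.toFinite.cast_ncard_eq] at this
    exact_mod_cast this
  have hmrk : mrk M X = I.ncard :=
    le_antisymm (csSup_le ⟨_, I, hI.indep, hI.subset, rfl⟩ hle)
      (le_csSup ⟨_, hle⟩ ⟨I, hI.indep, hI.subset, rfl⟩)
  rw [hmrk, I.toFinite.cast_ncard_eq, hI.encard_eq_eRk]

lemma mrk_mono (h : X ⊆ Y) : mrk M X ≤ mrk M Y := by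
  have := M.eRk_mono h
  rwa [← coe_mrk, ← coe_mrk, Nat.cast_le] at this

lemma mrk_closure (M : Matroid α) (X : Set α) : mrk M (M.closure X) = mrk M X := by
  have := M.eRk_closure_eq X
  rwa [← coe_mrk, ← coe_mrk, Nat.cast_inj] at this

lemma mrk_restrict {R : Set α} (h : X ⊆ R) : mrk (M ↾ R) X = mrk M X := by
  have := M.restrict_eRk_eq h
  rwa [← coe_mrk, ← coe_mrk, Nat.cast_inj] at this

lemma mrk_inter_add_mrk_union_le (M : Matroid α) (X Y : Set α) :
    mrk M (X ∩ Y) + mrk M (X ∪ Y) ≤ mrk M X + mrk M Y := by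
  have := M.eRk_inter_add_eRk_union_le X Y
  rwa [← coe_mrk, ← coe_mrk, ← coe_mrk, ← coe_mrk, ← Nat.cast_add, ← Nat.cast_add,
    Nat.cast_le] at this

lemma mrk_loops (M : Matroid α) : mrk M M.loops = 0 := by
  have := M.eRk_loops
  rwa [← coe_mrk, Nat.cast_eq_zero] at this

end Rank

section Flats

variable {M : Matroid α} {B F G R X E₁ E₂ : Set α}

lemma _root_.Matroid.IsFlat.closure_subset (hF : M.IsFlat F) (hXF : X ⊆ F) : M.closure X ⊆ F :=
  hF.closure ▸ M.closure_subset_closure hXF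

lemma _root_.Matroid.IsFlat.inter (hF : M.IsFlat F) (hG : M.IsFlat G) : M.IsFlat (F ∩ G) :=
  isFlat_iff_closure_eq.2 <| Subset.antisymm
    (subset_inter (hF.closure_subset inter_subset_left) (hG.closure_subset inter_subset_right))
    (M.subset_closure _ (inter_subset_left.trans hF.subset_ground))

lemma _root_.Matroid.IsFlat.restrict_closure_eq (hR : M.IsFlat R) (hXR : X ⊆ R) :
    (M ↾ R).closure X = M.closure X := by
  rw [M.restrict_closure_eq hXR hR.subset_ground, inter_eq_left.2 (hR.closure_subset hXR)]

lemma _root_.Matroid.IsFlat.restrict_loops_eq (hR : M.IsFlat R) : (M ↾ R).loops = M.loops := by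
  rw [M.restrict_loops_eq hR.subset_ground, inter_eq_left.2 hR.loops_subset]

lemma _root_.Matroid.IsFlat.isFlat_restrict_iff (hR : M.IsFlat R) :
    (M ↾ R).IsFlat F ↔ M.IsFlat F ∧ F ⊆ R := by
  refine ⟨fun h ↦ ?_, fun ⟨hF, hFR⟩ ↦ ?_⟩
  · have hFR : F ⊆ R := h.subset_ground
    rw [isFlat_iff_closure_eq, hR.restrict_closure_eq hFR] at h
    exact ⟨isFlat_iff_closure_eq.2 h, hFR⟩
  · rw [isFlat_iff_closure_eq, hR.restrict_closure_eq hFR, hF.closure]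

lemma subset_of_inter_eq_loops (h₂ : M.IsFlat E₂) (hunion : M.E = E₁ ∪ E₂) (hB : M.IsFlat B)
    (hBE₁ : B ∩ E₁ = M.loops) : B ⊆ E₂ := by
  intro e he
  obtain he₁ | he₂ := hunion ▸ hB.subset_ground he
  · exact h₂.loops_subset (hBE₁ ▸ ⟨he, he₁⟩)
  · exact he₂

lemma ModularFlat.mrk_add_mrk_eq_of_union (h₁ : ModularFlat M E₁) (h₂ : M.IsFlat E₂)
    (hunion : M.E = E₁ ∪ E₂) : mrk M E₁ + mrk M E₂ = mrk M (E₁ ∩ E₂) + mrk M M.E := by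
  rw [h₁.2 E₂ h₂, ← hunion, closure_ground]

end Flats

section Mobius

variable [Fintype α] {M : Matroid α} {R S : Set α}

noncomputable def flats (M : Matroid α) : Finset (Finset α) :=
  Finset.univ.powerset.filter (fun F : Finset α => M.IsFlat ↑F)

@[simp] lemma mem_flats {F : Finset α} : F ∈ flats M ↔ M.IsFlat ↑F := by
  simp [flats]

lemma charPoly_eq_sum_flats (M : Matroid α) :
    charPoly M = ∑ F ∈ flats M, Polynomial.C (mob M F) * Polynomial.X ^ (mrk M M.E - mrk M ↑F) :=
  rfl

lemma mob_eq (M : Matroid α) (F : Finset α) :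
    mob M F = if (F : Set α) = M.loops then 1
      else - ∑ G ∈ (flats M).filter (fun G : Finset α => (G : Set α) ⊂ F), mob M G := by
  rw [mob, Finset.sum_attach, flats, Finset.filter_filter, M.closure_empty]

lemma filter_flats_subset (hS : M.IsFlat S) :
    (flats M).filter (fun G : Finset α => (G : Set α) ⊆ S) =
      insert S.toFinset ((flats M).filter (fun G : Finset α => (G : Set α) ⊂ S)) := by
  ext G
  simp only [Finset.mem_filter, Finset.mem_insert, mem_flats, ← Finset.coe_inj, coe_toFinset]
  constructor
  · rintro ⟨hG, hGS⟩
    exact hGS.eq_or_ssubset.imp_right (⟨hG, ·⟩)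
  · rintro (rfl | ⟨hG, hGS⟩)
    exacts [⟨hS, Subset.rfl⟩, ⟨hG, hGS.subset⟩]

lemma sum_mob_filter_subset (hS : M.IsFlat S) :
    ∑ G ∈ (flats M).filter (fun G : Finset α => (G : Set α) ⊆ S), mob M G =
      if S = M.loops then 1 else 0 := by
  rw [filter_flats_subset hS, Finset.sum_insert (by simp), mob_eq, coe_toFinset]
  split_ifs with h
  · subst h
    have hempty : (flats M).filter (fun G : Finset α => (G : Set α) ⊂ M.loops) = ∅ :=
      Finset.filter_false_of_mem fun G hG hlt ↦
        hlt.not_subset (mem_flats.1 hG).loops_subset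
    rw [hempty, Finset.sum_empty, add_zero]
  · exact neg_add_cancel _

lemma eq_mob_of_sum_filter_subset (f : Finset α → ℤ)
    (hf : ∀ F ∈ flats M, ∑ G ∈ (flats M).filter (fun G : Finset α => (G : Set α) ⊆ F), f G =
      if (F : Set α) = M.loops then 1 else 0) :
    ∀ F ∈ flats M, f F = mob M F := by
  intro F
  induction F using Finset.strongInduction with
  | H F ih =>
    intro hF
    have hF' : M.IsFlat ↑F := mem_flats.1 hF
    have hf' := hf F hF
    have hmob := sum_mob_filter_subset hF'
    rw [filter_flats_subset hF', Finset.sum_insert (by simp), Finset.toFinset_coe] at hf' hmob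
    have hbelow : ∑ G ∈ (flats M).filter (fun G : Finset α => (G : Set α) ⊂ F), f G =
        ∑ G ∈ (flats M).filter (fun G : Finset α => (G : Set α) ⊂ F), mob M G :=
      Finset.sum_congr rfl fun G hG ↦ by
        rw [Finset.mem_filter] at hG
        exact ih G (Finset.coe_ssubset.1 hG.2) hG.1
    omega

lemma flats_restrict (hR : M.IsFlat R) :
    flats (M ↾ R) = (flats M).filter (fun G : Finset α => (G : Set α) ⊆ R) := by
  ext G
  simp [hR.isFlat_restrict_iff]

lemma mob_restrict (hR : M.IsFlat R) {F : Finset α} (hFR : (F : Set α) ⊆ R) :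
    mob (M ↾ R) F = mob M F := by
  induction F using Finset.strongInduction with
  | H F ih =>
    have hfilter : (flats (M ↾ R)).filter (fun G : Finset α => (G : Set α) ⊂ F) =
        (flats M).filter (fun G : Finset α => (G : Set α) ⊂ F) := by
      rw [flats_restrict hR, Finset.filter_filter]
      exact Finset.filter_congr fun G _ ↦ ⟨And.right, fun h ↦ ⟨h.subset.trans hFR, h⟩⟩
    rw [mob_eq, mob_eq, hR.restrict_loops_eq, hfilter]
    refine if_congr Iff.rfl rfl (congrArg _ (Finset.sum_congr rfl fun G hG ↦ ?_))
    have hGF := Finset.coe_ssubset.1 (Finset.mem_filter.1 hG).2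
    exact ih G hGF ((Finset.coe_subset.2 hGF.subset).trans hFR)

lemma charPoly_restrict (hR : M.IsFlat R) :
    charPoly (M ↾ R) = ∑ A ∈ (flats M).filter (fun A : Finset α => (A : Set α) ⊆ R),
      Polynomial.C (mob M A) * Polynomial.X ^ (mrk M R - mrk M ↑A) := by
  rw [charPoly_eq_sum_flats, flats_restrict hR]
  refine Finset.sum_congr rfl fun A hA ↦ ?_
  have hAR := (Finset.mem_filter.1 hA).2
  rw [mob_restrict hR hAR, restrict_ground_eq, mrk_restrict Subset.rfl, mrk_restrict hAR]

end Mobius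

section Modular

variable [Finite α] {M : Matroid α} {x A Y E₁ E₂ : Set α}

lemma mrk_closure_union_add_mrk_inter_le (M : Matroid α) (A Y : Set α) :
    mrk M (M.closure (A ∪ Y)) + mrk M (A ∩ Y) ≤ mrk M A + mrk M Y := by
  have := mrk_inter_add_mrk_union_le M A Y
  rw [mrk_closure]
  omega

lemma ModularFlat.mrk_closure_union_add_mrk_inter (hx : ModularFlat M x) (hAx : A ⊆ x)
    (hY : M.IsFlat Y) (hxY : mrk M (x ∩ Y) ≤ mrk M (A ∩ Y)) :
    mrk M (M.closure (A ∪ Y)) + mrk M (A ∩ Y) = mrk M A + mrk M Y := by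
  refine le_antisymm (mrk_closure_union_add_mrk_inter_le M A Y) ?_
  have hAE : A ⊆ M.E := hAx.trans hx.1.subset_ground
  -- compare the modular equations of `x` against `Y` and against `cl(A ∪ Y)`,
  -- whose joins with `x` coincide since `A ⊆ x`
  have hjoin : M.closure (x ∪ M.closure (A ∪ Y)) = M.closure (x ∪ Y) := by
    rw [closure_union_closure_right_eq, ← union_assoc, union_eq_left.2 hAx]
  have hY' := hx.2 Y hY
  have hJ' := hx.2 _ (M.isFlat_closure (A ∪ Y))
  rw [hjoin] at hJ'
  have hA : mrk M A ≤ mrk M (x ∩ M.closure (A ∪ Y)) :=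
    mrk_mono (subset_inter hAx (subset_union_left.trans
      (M.subset_closure _ (union_subset hAE hY.subset_ground))))
  omega

lemma ModularFlat.mrk_closure_union_eq (hx : ModularFlat M x) (hAx : A ⊆ x)
    (hY : M.IsFlat Y) (hxY : x ∩ Y = M.loops) :
    mrk M (M.closure (A ∪ Y)) = mrk M A + mrk M Y := by
  have hAY : mrk M (A ∩ Y) = 0 :=
    Nat.eq_zero_of_le_zero <| (mrk_mono (inter_subset_inter_left Y hAx)).trans
      (hxY ▸ (mrk_loops M).le)
  have := hx.mrk_closure_union_add_mrk_inter hAx hY (by rw [hxY, mrk_loops]; exact Nat.zero_le _)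
  omega

lemma ModularFlat.mrk_add_mrk_le (hx : ModularFlat M x) (hY : M.IsFlat Y)
    (hxY : x ∩ Y = M.loops) : mrk M x + mrk M Y ≤ mrk M M.E := by
  rw [← hx.mrk_closure_union_eq Subset.rfl hY hxY]
  exact mrk_mono (M.closure_subset_ground _)

lemma ModularFlat.restrict_inter (h₁ : ModularFlat M E₁) (h₂ : M.IsFlat E₂) :
    ModularFlat (M ↾ E₂) (E₁ ∩ E₂) := by
  refine ⟨h₂.isFlat_restrict_iff.2 ⟨h₁.1.inter h₂, inter_subset_right⟩, fun Y hY ↦ ?_⟩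
  obtain ⟨hY, hYE₂⟩ := h₂.isFlat_restrict_iff.1 hY
  have hXY : E₁ ∩ E₂ ∪ Y ⊆ E₂ := union_subset inter_subset_right hYE₂
  have hmeet : E₁ ∩ Y = E₁ ∩ E₂ ∩ Y := by
    rw [inter_assoc, inter_eq_right.2 hYE₂]
  rw [h₂.restrict_closure_eq hXY, mrk_restrict inter_subset_right, mrk_restrict hYE₂,
    mrk_restrict (inter_subset_left.trans inter_subset_right), mrk_restrict (h₂.closure_subset hXY),
    add_comm (mrk M (E₁ ∩ E₂ ∩ Y)),
    h₁.mrk_closure_union_add_mrk_inter inter_subset_left hY (by rw [hmeet])]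

end Modular

section Factorization

open Polynomial

variable [Fintype α] {M : Matroid α} {x : Set α}

noncomputable def complementPoly (M : Matroid α) (x : Set α) : ℤ[X] :=
  ∑ B ∈ (flats M).filter (fun B : Finset α => (B : Set α) ∩ x = M.loops),
    C (mob M B) * X ^ (mrk M M.E - mrk M x - mrk M ↑B)

noncomputable def flatPairs (M : Matroid α) (x : Set α) : Finset (Finset α × Finset α) :=
  (flats M).filter (fun A : Finset α => (A : Set α) ⊆ x) ×ˢ
    (flats M).filter (fun B : Finset α => (B : Set α) ∩ x = M.loops)

noncomputable def pairJoin (M : Matroid α) (p : Finset α × Finset α) : Finset α :=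
  (M.closure (↑p.1 ∪ ↑p.2)).toFinset

lemma coe_pairJoin (M : Matroid α) (p : Finset α × Finset α) :
    (pairJoin M p : Set α) = M.closure (↑p.1 ∪ ↑p.2) :=
  coe_toFinset _

lemma pairJoin_mem_flats (M : Matroid α) (p : Finset α × Finset α) : pairJoin M p ∈ flats M := by
  rw [mem_flats, coe_pairJoin]
  exact M.isFlat_closure _

lemma pairJoin_subset_iff {p : Finset α × Finset α} (hp : p ∈ flatPairs M x) {F : Set α}
    (hF : M.IsFlat F) : (pairJoin M p : Set α) ⊆ F ↔ (p.1 : Set α) ⊆ F ∧ (p.2 : Set α) ⊆ F := by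
  simp only [flatPairs, Finset.mem_product, Finset.mem_filter, mem_flats] at hp
  rw [coe_pairJoin, ← union_subset_iff]
  exact ⟨(M.subset_closure _ (union_subset hp.1.1.subset_ground hp.2.1.subset_ground)).trans,
    hF.closure_subset⟩

lemma sum_mob_mul_mob_fiber_pairJoin (hx : M.IsFlat x) :
    ∀ F ∈ flats M, ∑ p ∈ (flatPairs M x).filter (fun p => pairJoin M p = F),
      mob M p.1 * mob M p.2 = mob M F := by
  refine eq_mob_of_sum_filter_subset _ fun F hF ↦ ?_
  rw [mem_flats] at hF
  rw [Finset.sum_fiberwise_eq_sum_filter]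
  have hfilter : (flatPairs M x).filter
      (fun p => pairJoin M p ∈ (flats M).filter (fun G : Finset α => (G : Set α) ⊆ F)) =
      (flats M).filter (fun A : Finset α => (A : Set α) ⊆ x ∩ F) ×ˢ
        (flats M).filter (fun B : Finset α => (B : Set α) ∩ x = M.loops ∧ (B : Set α) ⊆ F) := by
    ext p
    constructor
    · intro hp
      obtain ⟨hp, hpF⟩ := Finset.mem_filter.1 hp
      rw [Finset.mem_filter, pairJoin_subset_iff hp hF] at hpF
      simp only [flatPairs, Finset.mem_product, Finset.mem_filter] at hp ⊢
      exact ⟨⟨hp.1.1, subset_inter hp.1.2 hpF.2.1⟩, hp.2.1, hp.2.2, hpF.2.2⟩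
    · intro hp
      simp only [Finset.mem_product, Finset.mem_filter, subset_inter_iff] at hp
      have hp' : p ∈ flatPairs M x := by
        simp only [flatPairs, Finset.mem_product, Finset.mem_filter]
        exact ⟨⟨hp.1.1, hp.1.2.1⟩, hp.2.1, hp.2.2.1⟩
      rw [Finset.mem_filter, Finset.mem_filter, pairJoin_subset_iff hp' hF]
      exact ⟨hp', pairJoin_mem_flats M p, hp.1.2.2, hp.2.2.2⟩
  rw [hfilter, Finset.sum_product, ← Finset.sum_mul_sum, sum_mob_filter_subset (hx.inter hF)]
  by_cases hxF : x ∩ F = M.loops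
  · have hB : (flats M).filter
        (fun B : Finset α => (B : Set α) ∩ x = M.loops ∧ (B : Set α) ⊆ F) =
        (flats M).filter (fun B : Finset α => (B : Set α) ⊆ F) :=
      Finset.filter_congr fun B hB ↦ ⟨And.right, fun hBF ↦ ⟨Subset.antisymm
        (hxF ▸ inter_comm x F ▸ inter_subset_inter_left x hBF)
        (subset_inter (mem_flats.1 hB).loops_subset hx.loops_subset), hBF⟩⟩
    rw [if_pos hxF, one_mul, hB, sum_mob_filter_subset hF]
  · rw [if_neg hxF, zero_mul, if_neg]
    intro hFl
    exact hxF (by rw [hFl, inter_eq_right.2 hx.loops_subset])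

theorem charPoly_eq_charPoly_restrict_mul_complementPoly (hx : ModularFlat M x) :
    charPoly M = charPoly (M ↾ x) * complementPoly M x := by
  have hmem : ∀ p ∈ flatPairs M x, (M.IsFlat ↑p.1 ∧ (p.1 : Set α) ⊆ x) ∧
      M.IsFlat ↑p.2 ∧ (p.2 : Set α) ∩ x = M.loops := by
    simp [flatPairs]
  have hexp : ∀ p ∈ flatPairs M x, mrk M M.E - mrk M ↑(pairJoin M p) =
      (mrk M x - mrk M ↑p.1) + (mrk M M.E - mrk M x - mrk M ↑p.2) := by
    intro p hp
    obtain ⟨⟨-, hAx⟩, hB, hBx⟩ := hmem p hp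
    have hxB : x ∩ ↑p.2 = M.loops := by rw [inter_comm, hBx]
    have := hx.mrk_add_mrk_le hB hxB
    have := mrk_mono (M := M) hAx
    rw [coe_pairJoin, hx.mrk_closure_union_eq hAx hB hxB]
    omega
  calc charPoly M
      = ∑ F ∈ flats M, ∑ p ∈ (flatPairs M x).filter (fun p => pairJoin M p = F),
          C (mob M p.1 * mob M p.2) * X ^ (mrk M M.E - mrk M ↑(pairJoin M p)) := by
        rw [charPoly_eq_sum_flats]
        refine Finset.sum_congr rfl fun F hF ↦ ?_
        rw [← sum_mob_mul_mob_fiber_pairJoin hx.1 F hF, map_sum, Finset.sum_mul]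
        refine Finset.sum_congr rfl fun p hp ↦ ?_
        rw [(Finset.mem_filter.1 hp).2]
    _ = ∑ p ∈ flatPairs M x, C (mob M p.1) * X ^ (mrk M x - mrk M ↑p.1) *
          (C (mob M p.2) * X ^ (mrk M M.E - mrk M x - mrk M ↑p.2)) := by
        rw [Finset.sum_fiberwise_of_maps_to fun p _ ↦ pairJoin_mem_flats M p]
        refine Finset.sum_congr rfl fun p hp ↦ ?_
        rw [hexp p hp, pow_add, C_mul]
        ring
    _ = charPoly (M ↾ x) * complementPoly M x := by
        rw [charPoly_restrict hx.1, complementPoly, Finset.sum_mul_sum, flatPairs,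
          Finset.sum_product]

end Factorization

section ModularJoin

variable [Fintype α] {M : Matroid α} {E₁ E₂ : Set α}

lemma complementPoly_restrict_inter (h₁ : ModularFlat M E₁) (h₂ : M.IsFlat E₂)
    (hunion : M.E = E₁ ∪ E₂) :
    complementPoly (M ↾ E₂) (E₁ ∩ E₂) = complementPoly M E₁ := by
  have hfilter : (flats (M ↾ E₂)).filter
      (fun B : Finset α => (B : Set α) ∩ (E₁ ∩ E₂) = (M ↾ E₂).loops) =
      (flats M).filter (fun B : Finset α => (B : Set α) ∩ E₁ = M.loops) := by
    rw [flats_restrict h₂, Finset.filter_filter, h₂.restrict_loops_eq]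
    refine Finset.filter_congr fun B hB ↦ ?_
    rw [mem_flats] at hB
    refine ⟨fun ⟨hBE₂, h⟩ ↦ ?_, fun h ↦ ?_⟩
    · rwa [← inter_assoc, inter_eq_left.2 (inter_subset_left.trans hBE₂)] at h
    · have hBE₂ := subset_of_inter_eq_loops h₂ hunion hB h
      exact ⟨hBE₂, by rwa [← inter_assoc, inter_eq_left.2 (inter_subset_left.trans hBE₂)]⟩
  rw [complementPoly, complementPoly, hfilter]
  refine Finset.sum_congr rfl fun B hB ↦ ?_
  rw [Finset.mem_filter, mem_flats] at hB
  have hBE₂ := subset_of_inter_eq_loops h₂ hunion hB.1 hB.2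
  have := h₁.mrk_add_mrk_eq_of_union h₂ hunion
  have := mrk_mono (M := M) (inter_subset_right : E₁ ∩ E₂ ⊆ E₂)
  have := mrk_mono (M := M) h₁.1.subset_ground
  rw [mob_restrict h₂ hBE₂, restrict_ground_eq, mrk_restrict Subset.rfl,
    mrk_restrict inter_subset_right, mrk_restrict hBE₂]
  congr 2
  omega

end ModularJoin

theorem stmt11_general [Fintype α] (M : Matroid α)
    {E₁ E₂ : Set α} (h₁ : ModularFlat M E₁) (h₂ : ModularFlat M E₂)
    (hunion : M.E = E₁ ∪ E₂) :
    charPoly M * charPoly (M ↾ (E₁ ∩ E₂)) =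
      charPoly (M ↾ E₁) * charPoly (M ↾ E₂) := by
  have hM := charPoly_eq_charPoly_restrict_mul_complementPoly h₁
  have hM₂ := charPoly_eq_charPoly_restrict_mul_complementPoly (h₁.restrict_inter h₂.1)
  rw [restrict_restrict_eq M inter_subset_right,
    complementPoly_restrict_inter h₁ h₂.1 hunion] at hM₂
  rw [hM, hM₂]
  ring

/-- Brylawski: for a modular join `M = P_X(M₁, M₂)`,
`χ(M, t) · χ(M|X, t) = χ(M₁, t) · χ(M₂, t)`. -/
theorem stmt11 [Fintype α] (M : Matroid α) (hsimple : SimpleM M)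
    {E₁ E₂ : Set α} (h₁ : ModularFlat M E₁) (h₂ : ModularFlat M E₂)
    (hp₁ : E₁ ≠ M.E) (hp₂ : E₂ ≠ M.E) (hunion : M.E = E₁ ∪ E₂) :
    charPoly M * charPoly (M ↾ (E₁ ∩ E₂)) =
      charPoly (M ↾ E₁) * charPoly (M ↾ E₂) :=
  stmt11_general M h₁ h₂ hunion

end Paper
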